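/- Every countable locally finite-by-abelian group G contains a free abelian subgroup H of locally finite index in G such that Q(H) = G, where Q(H) = {x ∈ G : {h⁻¹xh : h ∈ H} is finite} is the quasi-centralizer of H in G. -/

import Mathlib

/-- A group is finite-by-abelian: it has a finite normal subgroup with abelian quotient. -/
def FiniteByAbelian (G : Type*) [Group G] : Prop :=
  ∃ N : Subgroup G, N.Normal ∧ Finite N ∧ ∀ a b : G, a * b * a⁻¹ * b⁻¹ ∈ N

/-- A group is locally finite-by-abelian: every finitely generated subgroup is
finite-by-abelian. -/
def LocallyFiniteByAbelian (G : Type*) [Group G] : Prop :=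
  ∀ K : Subgroup G, Group.FG K → FiniteByAbelian K

/-- A subgroup `H` of a group `G` has locally finite index in `G`: `H` has finite index
in every subgroup of `G` generated by `H ∪ F` for a finite set `F ⊆ G`. -/
def LocallyFiniteIndex {G : Type*} [Group G] (H : Subgroup G) : Prop :=
  ∀ F : Finset G, H.relIndex (H ⊔ Subgroup.closure (F : Set G)) ≠ 0

/-- The quasi-centralizer of a subset `A` of a group `G`. -/
def quasiCentralizer {G : Type*} [Group G] (A : Set G) : Set G :=
  {x : G | ((fun a => a⁻¹ * x * a) '' A).Finite}

/-!
Enumerate `G` and let `Kₙ` be generated by the first `n + 1` elements. Each `Kₙ` is finitely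
generated with finitely many commutators, so its centre has finite index and is a finitely
generated abelian group. Inductively pick a free abelian `Bₙ` in the centre of `Kₙ`, meeting
`B₀ ⊔ ⋯ ⊔ Bₙ₋₁` trivially and with `B₀ ⊔ ⋯ ⊔ Bₙ` of finite index in `Kₙ`: lift a basis of the
centre modulo the earlier blocks and modulo torsion. The blocks commute pairwise and form an
internal direct sum, so `H = ⨆ Bₙ` is free abelian. As `Bₘ` centralizes `Kₙ` for `m ≥ n`,
`H ≤ Kₙ ⊔ C(Kₙ)`; hence `H` has finite index in `Kₙ ⊔ H`, and `H` conjugates each `x ∈ Kₙ` only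
through `Kₙ`, where `x` has finitely many conjugates.
-/

universe u

open scoped commutatorElement Pointwise

def IsFreeAbelianGroup (A : Type u) [Group A] : Prop :=
  ∃ ι : Type u, Nonempty (A ≃* Multiplicative (ι →₀ ℤ))

theorem IsFreeAbelianGroup.of_mulEquiv {A B : Type u} [Group A] [Group B] (e : A ≃* B)
    (hB : IsFreeAbelianGroup B) : IsFreeAbelianGroup A :=
  let ⟨ι, ⟨f⟩⟩ := hB
  ⟨ι, ⟨e.trans f⟩⟩

theorem IsFreeAbelianGroup.of_basis {A ι : Type u} [CommGroup A]
    (b : Module.Basis ι ℤ (Additive A)) : IsFreeAbelianGroup A :=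
  ⟨ι, ⟨AddEquiv.toMultiplicativeRight b.repr.toAddEquiv⟩⟩

def Subgroup.toIntSubmodule {A : Type*} [CommGroup A] : Subgroup A ≃o Submodule ℤ (Additive A) :=
  Subgroup.toAddSubgroup.trans AddSubgroup.toIntSubmodule

def Subgroup.toIntSubmoduleAddEquiv {A : Type*} [CommGroup A] (S : Subgroup A) :
    ↥(Subgroup.toIntSubmodule S) ≃+ Additive ↥S :=
  { Equiv.refl _ with map_add' := fun _ _ => rfl }

theorem Subgroup.isFreeAbelianGroup_of_free {A : Type u} [CommGroup A] (S : Subgroup A)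
    [Module.Free ℤ (Subgroup.toIntSubmodule S)] : IsFreeAbelianGroup S :=
  IsFreeAbelianGroup.of_basis ((Module.Free.chooseBasis ℤ _).map
    S.toIntSubmoduleAddEquiv.toIntLinearEquiv)

theorem Submodule.exists_free_disjoint_isTorsion_quotient {R M : Type*} [CommRing R] [IsDomain R]
    [IsPrincipalIdealRing R] [AddCommGroup M] [Module R M] [Module.Finite R M]
    (S : Submodule R M) :
    ∃ B : Submodule R M, Module.Free R B ∧ Disjoint B S ∧ Module.IsTorsion R (M ⧸ (S ⊔ B)) := by
  let T := Submodule.torsion R (M ⧸ S)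
  let π : M →ₗ[R] (M ⧸ S) ⧸ T := T.mkQ ∘ₗ S.mkQ
  obtain ⟨σ, hσ⟩ := Module.projective_lifting_property π LinearMap.id
    (T.mkQ_surjective.comp S.mkQ_surjective)
  have hπσ : ∀ y, π (σ y) = y := LinearMap.congr_fun hσ
  have hπS : ∀ x ∈ S, π x = 0 := fun x hx => by
    simp [π, (Submodule.Quotient.mk_eq_zero S).mpr hx]
  refine ⟨LinearMap.range σ,
    Module.Free.of_equiv (LinearEquiv.ofInjective σ (Function.LeftInverse.injective hπσ)), ?_, ?_⟩
  · rw [Submodule.disjoint_def]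
    rintro _ ⟨y, rfl⟩ hy
    rw [← hπσ y, hπS _ hy, map_zero]
  · rintro ⟨m⟩
    have hker : π (m - σ (π m)) = 0 := by rw [map_sub, hπσ, sub_self]
    obtain ⟨r, hr⟩ := (Submodule.mem_torsion_iff _).mp ((Submodule.Quotient.mk_eq_zero T).mp hker)
    have hrS : (r : R) • (m - σ (π m)) ∈ S := (Submodule.Quotient.mk_eq_zero S).mp hr
    refine ⟨r, (Submodule.Quotient.mk_eq_zero _).mpr ?_⟩
    show (r : R) • m ∈ S ⊔ LinearMap.range σ
    rw [← sub_add_cancel m (σ (π m)), smul_add]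
    exact Submodule.add_mem_sup hrS (Submodule.smul_mem _ _ (LinearMap.mem_range_self σ _))

theorem CommGroup.exists_free_disjoint_finiteIndex {A : Type u} [CommGroup A] [Group.FG A]
    (S : Subgroup A) :
    ∃ B : Subgroup A, IsFreeAbelianGroup B ∧ Disjoint B S ∧ (S ⊔ B).FiniteIndex := by
  let e : Subgroup A ≃o Submodule ℤ (Additive A) := Subgroup.toIntSubmodule
  have : Module.Finite ℤ (Additive A) := Module.Finite.iff_addGroup_fg.mpr inferInstance
  obtain ⟨B, hfree, hdisj, htors⟩ := (e S).exists_free_disjoint_isTorsion_quotient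
  refine ⟨e.symm B, ?_, ?_, ?_⟩
  · have : Module.Free ℤ (e (e.symm B)) := by rwa [e.apply_symm_apply]
    exact (e.symm B).isFreeAbelianGroup_of_free
  · rwa [← disjoint_map_orderIso_iff e, e.apply_symm_apply]
  · have hsup : S ⊔ e.symm B = e.symm (e S ⊔ B) := by rw [map_sup, e.symm_apply_apply]
    have hfin : Finite (Additive A ⧸ (e S ⊔ B)) := Module.finite_of_fg_torsion _ htors
    have : Finite (Additive A ⧸ Subgroup.toAddSubgroup (e.symm (e S ⊔ B))) := hfin
    rw [hsup]
    refine ⟨?_⟩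
    rw [← Subgroup.index_toAddSubgroup]
    exact AddSubgroup.index_ne_zero_of_finite

theorem FiniteByAbelian.finite_commutatorSet {G : Type*} [Group G] (h : FiniteByAbelian G) :
    Finite (commutatorSet G) := by
  obtain ⟨N, -, hN, hcomm⟩ := h
  refine Set.Finite.to_subtype (Set.Finite.subset (s := (N : Set G)) (Set.toFinite _) ?_)
  rintro _ ⟨a, b, rfl⟩
  exact hcomm a b

open scoped IsMulCommutative in
theorem Subgroup.exists_free_le_center_disjoint {G : Type u} [Group G] (K : Subgroup G)
    [Group.FG K] [Finite (commutatorSet K)] (S : Subgroup G) :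
    ∃ B : Subgroup G, B ≤ K ⊓ Subgroup.centralizer K ∧ IsFreeAbelianGroup B ∧ Disjoint B S ∧
      (S ⊔ B).relIndex K ≠ 0 := by
  let ι : Subgroup.center K →* G := K.subtype.comp (Subgroup.center K).subtype
  have hι : Function.Injective ι := K.subtype_injective.comp (Subgroup.center K).subtype_injective
  let T : Subgroup (Subgroup.center K) := S.comap ι
  obtain ⟨B, hfree, hdisj, hidx⟩ := CommGroup.exists_free_disjoint_finiteIndex T
  refine ⟨B.map ι, ?_, hfree.of_mulEquiv (B.equivMapOfInjective ι hι).symm, ?_, ?_⟩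
  · rintro _ ⟨z, -, rfl⟩
    refine ⟨(z : K).2, Subgroup.mem_centralizer_iff.mpr fun k hk => ?_⟩
    exact congrArg Subtype.val (Subgroup.mem_center_iff.mp z.2 ⟨k, hk⟩)
  · rw [Subgroup.disjoint_def] at hdisj ⊢
    rintro _ ⟨z, hz, rfl⟩ hzS
    rw [hdisj hz hzS, map_one]
  · have hle : (T ⊔ B).map (Subgroup.center K).subtype ≤ (S ⊔ B.map ι).subgroupOf K := by
      rw [Subgroup.map_le_iff_le_comap, Subgroup.subgroupOf, Subgroup.comap_comap]
      exact sup_le (Subgroup.comap_mono le_sup_left)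
        (B.le_comap_map ι |>.trans (Subgroup.comap_mono le_sup_right))
    have : ((T ⊔ B).map (Subgroup.center K).subtype).FiniteIndex := by
      refine ⟨?_⟩
      rw [Subgroup.index_map_subtype]
      exact Nat.mul_ne_zero hidx.index_ne_zero Subgroup.FiniteIndex.index_ne_zero
    exact (Subgroup.finiteIndex_of_le hle).index_ne_zero

theorem iSupIndep_of_disjoint_finsetSup_range {α : Type*} [CompleteLattice α] [IsModularLattice α]
    [IsCompactlyGenerated α] {f : ℕ → α} (h : ∀ n, Disjoint (f n) ((Finset.range n).sup f)) :
    iSupIndep f := by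
  have hrange : ∀ n, (Finset.range n).SupIndep f := by
    intro n
    induction n with
    | zero => exact Finset.supIndep_empty f
    | succ n ih => rw [Finset.range_add_one]; exact ih.insert (h n)
  refine iSupIndep_iff_supIndep.mpr fun s => (hrange (s.sup id + 1)).subset fun i hi => ?_
  exact Finset.mem_range.mpr (Nat.lt_succ_of_le (Finset.le_sup (f := id) hi))

theorem CommGroup.isFreeAbelianGroup_of_disjoint {A : Type u} [CommGroup A] (B : ℕ → Subgroup A)
    (hfree : ∀ n, IsFreeAbelianGroup (B n))
    (hdisj : ∀ n, Disjoint (B n) ((Finset.range n).sup B)) (htop : ⨆ n, B n = ⊤) :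
    IsFreeAbelianGroup A := by
  let e : Subgroup A ≃o Submodule ℤ (Additive A) := Subgroup.toIntSubmodule
  have hind : iSupIndep (e ∘ B) := iSupIndep_of_disjoint_finsetSup_range fun n => by
    rw [Function.comp_apply, ← map_finset_sup]
    exact (disjoint_map_orderIso_iff e).mpr (hdisj n)
  have hint : DirectSum.IsInternal (e ∘ B) :=
    (DirectSum.isInternal_submodule_iff_iSupIndep_and_iSup_eq_top _).mpr
      ⟨hind, by rw [Function.comp_def, ← e.map_iSup, htop, map_top]⟩
  choose ι hι using hfree
  exact IsFreeAbelianGroup.of_basis (hint.collectedBasis fun n => Module.Basis.ofRepr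
    ((B n).toIntSubmoduleAddEquiv.trans (MulEquiv.toAdditiveLeft (hι n).some)).toIntLinearEquiv)

open scoped IsMulCommutative in
theorem Subgroup.isFreeAbelianGroup_iSup {G : Type u} [Group G] (B : ℕ → Subgroup G)
    [IsMulCommutative ↥(⨆ n, B n)] (hfree : ∀ n, IsFreeAbelianGroup (B n))
    (hdisj : ∀ n, Disjoint (B n) ((Finset.range n).sup B)) :
    IsFreeAbelianGroup ↥(⨆ n, B n) := by
  set H := ⨆ n, B n
  have hdisj' : ∀ n, Disjoint ((B n).subgroupOf H)
      ((Finset.range n).sup fun m => (B m).subgroupOf H) := by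
    intro n
    have hle : (Finset.range n).sup (fun m => (B m).subgroupOf H) ≤
        ((Finset.range n).sup B).subgroupOf H :=
      Finset.sup_le fun m hm => Subgroup.subgroupOf_mono H (Finset.le_sup (f := B) hm)
    refine Disjoint.mono_right hle (Subgroup.disjoint_def.mpr fun hx hx' => ?_)
    exact Subtype.ext (Subgroup.disjoint_def.mp (hdisj n) (Subgroup.mem_subgroupOf.mp hx)
      (Subgroup.mem_subgroupOf.mp hx'))
  have htop : ⨆ n, (B n).subgroupOf H = ⊤ := by
    apply Subgroup.map_injective H.subtype_injective
    rw [Subgroup.map_iSup, ← MonoidHom.range_eq_map, H.range_subtype]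
    simp_rw [Subgroup.subgroupOf_map_subtype]
    exact iSup_congr fun n => inf_of_le_left (le_iSup B n)
  exact CommGroup.isFreeAbelianGroup_of_disjoint (fun n => (B n).subgroupOf H)
    (fun n => (hfree n).of_mulEquiv (Subgroup.subgroupOfEquivOfLe (le_iSup B n))) hdisj' htop

theorem Subgroup.relIndex_sup_ne_zero_of_le_normalizer {G : Type*} [Group G] {H K : Subgroup G}
    (hH : H ≤ Subgroup.normalizer K) (h : H.relIndex K ≠ 0) : H.relIndex (K ⊔ H) ≠ 0 := by
  have : (H.subgroupOf K).FiniteIndex := ⟨h⟩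
  let f : K ⧸ H.subgroupOf K → ↥(K ⊔ H) ⧸ H.subgroupOf (K ⊔ H) :=
    Quotient.map' (Subgroup.inclusion le_sup_left) fun a b hab => by
      rw [QuotientGroup.leftRel_apply] at hab ⊢
      exact hab
  have hf : Function.Surjective f := by
    intro q
    obtain ⟨⟨_, hx⟩, rfl⟩ := QuotientGroup.mk_surjective q
    obtain ⟨k, hk, c, hc, rfl⟩ : _ ∈ (K : Set G) * (H : Set G) := by
      rwa [← Subgroup.coe_mul_of_right_le_normalizer_left _ _ hH]
    refine ⟨QuotientGroup.mk ⟨k, hk⟩, QuotientGroup.eq.mpr ?_⟩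
    simpa [Subgroup.mem_subgroupOf] using hc
  have := Finite.of_surjective f hf
  exact Subgroup.index_ne_zero_of_finite

theorem Subgroup.finite_image_conj_of_finite_commutatorSet {G : Type*} [Group G] {K : Subgroup G}
    [Finite (commutatorSet K)] {x : G} (hx : x ∈ K) :
    ((fun a => a⁻¹ * x * a) '' K).Finite := by
  refine (Set.finite_range fun c : commutatorSet K => x * ((c : K) : G)).subset ?_
  rintro _ ⟨a, ha, rfl⟩
  refine ⟨⟨⁅(⟨x, hx⟩ : K)⁻¹, (⟨a, ha⟩ : K)⁻¹⁆, commutator_mem_commutatorSet _ _⟩, ?_⟩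
  simp [commutatorElement_def, mul_assoc]

theorem subset_quasiCentralizer {G : Type*} [Group G] {K : Subgroup G} [Finite (commutatorSet K)]
    {A : Set G} (hA : A ⊆ (K ⊔ Subgroup.centralizer K : Subgroup G)) :
    (K : Set G) ⊆ quasiCentralizer A := by
  intro x hx
  refine (Subgroup.finite_image_conj_of_finite_commutatorSet hx).subset ?_
  rintro _ ⟨h, hh, rfl⟩
  rw [Subgroup.coe_mul_of_right_le_normalizer_left _ _ (Subgroup.centralizer_le_normalizer _)]
    at hA
  obtain ⟨k, hk, c, hc, rfl⟩ := hA hh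
  refine ⟨k, hk, ?_⟩
  have hconj : k⁻¹ * x * k ∈ K := K.mul_mem (K.mul_mem (K.inv_mem hk) hx) hk
  have hcomm := Subgroup.mem_centralizer_iff.mp hc _ hconj
  calc k⁻¹ * x * k = c⁻¹ * (k⁻¹ * x * k * c) := by rw [hcomm, inv_mul_cancel_left]
    _ = (k * c)⁻¹ * x * (k * c) := by group

theorem Subgroup.isMulCommutative_iSup_of_le_centralizer {G : Type*} [Group G]
    {B K : ℕ → Subgroup G} (hK : Monotone K) (hB : ∀ n, B n ≤ K n ⊓ Subgroup.centralizer (K n)) :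
    IsMulCommutative ↥(⨆ n, B n) := by
  have hcomm : ∀ m n, m ≤ n → B n ≤ Subgroup.centralizer (B m) := fun m n h =>
    ((hB n).trans inf_le_right).trans
      (Subgroup.centralizer_le (((hB m).trans inf_le_left).trans (hK h)))
  rw [← Subgroup.le_centralizer_iff_isMulCommutative]
  refine iSup_le fun m => Subgroup.le_centralizer_iff.mpr (iSup_le fun n => ?_)
  rcases le_total m n with h | h
  · exact hcomm m n h
  · exact Subgroup.le_centralizer_iff.mp (hcomm n m h)

theorem LocallyFiniteByAbelian.exists_free_le_center_disjoint {G : Type u} [Group G]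
    (hG : LocallyFiniteByAbelian G) {K : Subgroup G} (hK : Group.FG K) (S : Subgroup G) :
    ∃ B : Subgroup G, B ≤ K ⊓ Subgroup.centralizer K ∧ IsFreeAbelianGroup B ∧ Disjoint B S ∧
      (S ⊔ B).relIndex K ≠ 0 :=
  have := (hG K hK).finite_commutatorSet
  K.exists_free_le_center_disjoint S

section Construction

variable {G : Type u} [Group G] (hG : LocallyFiniteByAbelian G) {K : ℕ → Subgroup G}
  (hK : ∀ n, Group.FG (K n))

noncomputable def freeComplement (S : Subgroup G) (n : ℕ) : Subgroup G :=
  (hG.exists_free_le_center_disjoint (hK n) S).choose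

noncomputable def freeChain : ℕ → Subgroup G
  | 0 => ⊥
  | n + 1 => freeChain n ⊔ freeComplement hG hK (freeChain n) n

noncomputable def freeBlock (n : ℕ) : Subgroup G :=
  freeComplement hG hK (freeChain hG hK n) n

theorem freeBlock_spec (n : ℕ) :
    freeBlock hG hK n ≤ K n ⊓ Subgroup.centralizer (K n) ∧
      IsFreeAbelianGroup (freeBlock hG hK n) ∧ Disjoint (freeBlock hG hK n) (freeChain hG hK n) ∧
      (freeChain hG hK (n + 1)).relIndex (K n) ≠ 0 :=
  (hG.exists_free_le_center_disjoint (hK n) _).choose_spec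

theorem freeChain_eq_finsetSup (n : ℕ) :
    freeChain hG hK n = (Finset.range n).sup (freeBlock hG hK) := by
  induction n with
  | zero => rfl
  | succ n ih =>
    rw [Finset.range_add_one, Finset.sup_insert, sup_comm, ← ih]
    rfl

end Construction

theorem LocallyFiniteByAbelian.exists_free_le_sup_centralizer {G : Type u} [Group G]
    (hG : LocallyFiniteByAbelian G) {K : ℕ → Subgroup G} (hK : ∀ n, Group.FG (K n))
    (hmono : Monotone K) :
    ∃ H : Subgroup G, IsFreeAbelianGroup H ∧ (∀ n, H ≤ K n ⊔ Subgroup.centralizer (K n)) ∧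
      ∀ n, H.relIndex (K n) ≠ 0 := by
  have hB n := (freeBlock_spec hG hK n).1
  have := Subgroup.isMulCommutative_iSup_of_le_centralizer hmono hB
  refine ⟨⨆ n, freeBlock hG hK n, Subgroup.isFreeAbelianGroup_iSup _
    (fun n => (freeBlock_spec hG hK n).2.1) (fun n => ?_), fun n => iSup_le fun m => ?_,
    fun n => ?_⟩
  · rw [← freeChain_eq_finsetSup]
    exact (freeBlock_spec hG hK n).2.2.1
  · rcases le_total m n with h | h
    · exact ((hB m).trans inf_le_left).trans ((hmono h).trans le_sup_left)
    · exact ((hB m).trans inf_le_right).trans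
        ((Subgroup.centralizer_le (hmono h)).trans le_sup_right)
  · have hle : freeChain hG hK (n + 1) ≤ ⨆ n, freeBlock hG hK n := by
      rw [freeChain_eq_finsetSup]
      exact Finset.sup_le fun m _ => le_iSup _ m
    exact ne_zero_of_dvd_ne_zero (freeBlock_spec hG hK n).2.2.2
      (Subgroup.relIndex_dvd_of_le_left _ hle)

/-- Every countable locally finite-by-abelian group `G` contains a free abelian subgroup
`H` of locally finite index in `G` with `Q(H) = G`. -/
theorem exists_free_abelian_subgroup_of_locallyFiniteByAbelian
    (G : Type) [Group G] [Countable G] (hG : LocallyFiniteByAbelian G) :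
    ∃ H : Subgroup G, (∃ ι : Type, Nonempty (H ≃* Multiplicative (ι →₀ ℤ))) ∧
      LocallyFiniteIndex H ∧ quasiCentralizer (H : Set G) = Set.univ := by
  obtain ⟨e, he⟩ := exists_surjective_nat G
  let K n := Subgroup.closure (e '' Set.Iic n)
  have hmono : Monotone K := fun m n h =>
    Subgroup.closure_mono (Set.image_mono (Set.Iic_subset_Iic.mpr h))
  have hK n : Group.FG (K n) :=
    (Group.fg_iff_subgroup_fg _).mpr (Subgroup.fg_iff _ |>.mpr ⟨_, rfl, (Set.finite_Iic n).image e⟩)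
  have hcover (F : Finset G) : ∃ n, (F : Set G) ⊆ K n := by
    obtain ⟨n, hn⟩ := Finset.exists_le (F.image (Function.surjInv he))
    refine ⟨n, fun x hx => Subgroup.subset_closure ⟨_, ?_, Function.surjInv_eq he x⟩⟩
    exact hn _ (Finset.mem_image_of_mem _ hx)
  obtain ⟨H, hfree, hsplit, hidx⟩ := hG.exists_free_le_sup_centralizer hK hmono
  refine ⟨H, hfree, fun F => ?_, Set.eq_univ_of_forall fun x => ?_⟩
  · obtain ⟨n, hn⟩ := hcover F
    have hnorm : H ≤ Subgroup.normalizer (K n) :=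
      (hsplit n).trans (sup_le Subgroup.le_normalizer (Subgroup.centralizer_le_normalizer _))
    refine fun h0 => Subgroup.relIndex_sup_ne_zero_of_le_normalizer hnorm (hidx n)
      (Subgroup.relIndex_eq_zero_of_le_right ?_ h0)
    exact sup_le le_sup_right ((Subgroup.closure_le _).mpr hn |>.trans le_sup_left)
  · obtain ⟨n, hn⟩ := hcover {x}
    have := (hG (K n) (hK n)).finite_commutatorSet
    exact subset_quasiCentralizer (hsplit n) (hn (Finset.mem_singleton_self x))
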